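/- arXiv:2003.06706 — 6 statements merged into one kernel-verified Lean document; each statement's English description precedes it below -/
import Mathlib

section
/- For every d : ℕ, every finite set X ⊆ EuclideanSpace ℝ (Fin d), and every function f : EuclideanSpace ℝ (Fin d) → ℝ, there exist n : ℕ, vectors a : Fin n → EuclideanSpace ℝ (Fin d), reals b c : Fin n → ℝ, and d₀ : ℝ, such that for all x ∈ X, f x = d₀ + ∑ i, c i * max 0 (⟪a i, x⟫ + b i). That is, any function on a finite subset of ℝ^d is perfectly represented (zero sup-norm error) by a single-hidden-layer ReLU neural network. -/
/-!
Choose a direction `v` along which the finitely many points are pairwise distinguished; it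
exists because a real vector space is not a finite union of the proper hyperplanes
`(x - y)ᗮ`. Then add the points one at a time in increasing order of `⟪v, x⟫`: a network
interpolating `f` on the earlier points is corrected at the new point `p` by a ramp
`max 0 (⟪v, x⟫ - m)` with threshold `m` between the earlier points and `p`, which vanishes on
all earlier points.
-/

open Set
open scoped InnerProductSpace

variable {E : Type*} [NormedAddCommGroup E] [InnerProductSpace ℝ E]

theorem exists_inner_injOn {s : Set E} (hs : s.Finite) :
    ∃ v : E, InjOn (fun x => ⟪v, x⟫_ℝ) s := by
  have : Finite s.offDiag := hs.offDiag.to_subtype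
  by_contra! hnot
  have hcover : ⋃ xy : s.offDiag, ((ℝ ∙ (xy.1.1 - xy.1.2))ᗮ : Set E) = univ := by
    refine eq_univ_of_forall fun v => mem_iUnion.2 ?_
    obtain ⟨x, hx, y, hy, hxy, hne⟩ := by simpa [InjOn] using hnot v
    refine ⟨⟨(x, y), hx, hy, hne⟩, ?_⟩
    simp [Submodule.mem_orthogonal_singleton_iff_inner_right, inner_sub_left,
      real_inner_comm, hxy]
  obtain ⟨⟨⟨x, y⟩, _, _, hne⟩, htop⟩ := Subspace.exists_eq_top_of_iUnion_eq_univ hcover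
  rw [Submodule.orthogonal_eq_top_iff, Submodule.span_singleton_eq_bot, sub_eq_zero] at htop
  exact hne htop

def IsReLUNet (F : E → ℝ) : Prop :=
  ∃ (n : ℕ) (a : Fin n → E) (b c : Fin n → ℝ) (d₀ : ℝ),
    F = fun x => d₀ + ∑ i, c i * max 0 (⟪a i, x⟫_ℝ + b i)

theorem isReLUNet_const (d₀ : ℝ) : IsReLUNet (fun _ : E => d₀) :=
  ⟨0, Fin.elim0, Fin.elim0, Fin.elim0, d₀, by simp⟩

theorem IsReLUNet.add_relu {F : E → ℝ} (hF : IsReLUNet F) (a : E) (b c : ℝ) :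
    IsReLUNet (fun x => F x + c * max 0 (⟪a, x⟫_ℝ + b)) := by
  obtain ⟨n, as, bs, cs, d₀, rfl⟩ := hF
  refine ⟨n + 1, Fin.snoc as a, Fin.snoc bs b, Fin.snoc cs c, d₀, ?_⟩
  funext x
  simp [Fin.sum_univ_castSucc, add_assoc]

theorem Finset.exists_forall_le_lt {ι α : Type*} [LinearOrder α] [NoMinOrder α]
    (s : Finset ι) (g : ι → α) {t : α} (h : ∀ x ∈ s, g x < t) :
    ∃ m, (∀ x ∈ s, g x ≤ m) ∧ m < t := by
  classical
  obtain ⟨t', ht'⟩ := exists_lt t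
  refine ⟨(insert t' (s.image g)).max' (Finset.insert_nonempty _ _), fun x hx => ?_, ?_⟩
  · exact Finset.le_max' _ _ (Finset.mem_insert_of_mem (Finset.mem_image_of_mem g hx))
  · rw [Finset.max'_lt_iff]
    simpa [ht'] using h

theorem exists_isReLUNet_eqOn_of_injOn (v : E) (f : E → ℝ) (s : Finset E)
    (hs : InjOn (fun x => ⟪v, x⟫_ℝ) s) : ∃ F, IsReLUNet F ∧ EqOn f F s := by
  classical
  induction s using Finset.induction_on_max_value (fun x => ⟪v, x⟫_ℝ) with
  | empty => exact ⟨fun _ => 0, isReLUNet_const 0, by simp⟩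
  | insert p s hp hmax ih =>
    rw [Finset.coe_insert] at hs
    obtain ⟨F, hF, hfF⟩ := ih (hs.mono (subset_insert _ _))
    have hlt : ∀ x ∈ s, ⟪v, x⟫_ℝ < ⟪v, p⟫_ℝ := fun x hx => (hmax x hx).lt_of_ne fun h =>
      hp ((hs.eq_iff (mem_insert_of_mem _ hx) (mem_insert _ _)).1 h ▸ hx)
    obtain ⟨m, hle, hm⟩ := s.exists_forall_le_lt (fun x => ⟪v, x⟫_ℝ) hlt
    refine ⟨fun x => F x + (f p - F p) / (⟪v, p⟫_ℝ - m) * max 0 (⟪v, x⟫_ℝ + -m),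
      hF.add_relu v (-m) _, ?_⟩
    rw [Finset.coe_insert]
    refine (eqOn_singleton.2 ?_).union fun x hx => ?_
    · rw [max_eq_right (by linarith), ← sub_eq_add_neg, div_mul_cancel₀ _ (by linarith)]
      ring
    · rw [max_eq_left (by linarith [hle x hx]), mul_zero, add_zero]
      exact hfF hx

/-- Any function on a finite subset of `ℝ^d` is perfectly represented (zero
sup-norm error) by a single-hidden-layer ReLU neural network
`x ↦ d₀ + ∑ i, c i * max 0 (⟪a i, x⟫ + b i)`. -/
theorem finite_universal_approximation (d : ℕ)
    (X : Set (EuclideanSpace ℝ (Fin d))) (hX : X.Finite)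
    (f : EuclideanSpace ℝ (Fin d) → ℝ) :
    ∃ (n : ℕ) (a : Fin n → EuclideanSpace ℝ (Fin d)) (b c : Fin n → ℝ) (d₀ : ℝ),
      ∀ x ∈ X, f x = d₀ + ∑ i, c i * max 0 ((inner ℝ (a i) x : ℝ) + b i) := by
  obtain ⟨v, hv⟩ := exists_inner_injOn hX
  obtain ⟨F, ⟨n, a, b, c, d₀, rfl⟩, hfF⟩ :=
    exists_isReLUNet_eqOn_of_injOn v f hX.toFinset (by rwa [hX.coe_toFinset])
  exact ⟨n, a, b, c, d₀, fun x hx => hfF (hX.mem_toFinset.2 hx)⟩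
end

section
/- Let 𝒢 denote the type of finite labeled multigraphs with isomorphism ≃, fix b d : ℕ, and let 𝒢_b denote the set of multigraphs of size at most b. Let Alg : 𝒢 → EuclideanSpace ℝ (Fin d) satisfy iso-injectivity on 𝒢_b (for G, H ∈ 𝒢_b, Alg G = Alg H implies G ≃ H), and let f : 𝒢 → ℝ be isomorphism-invariant (G ≃ H implies f G = f H). Then there exist n : ℕ, a : Fin n → EuclideanSpace ℝ (Fin d), b' c : Fin n → ℝ, and d₀ : ℝ such that for every G ∈ 𝒢_b, f G = d₀ + ∑ i, c i * max 0 (⟪a i, Alg G⟫ + b' i). That is, every isomorphism-invariant function on bounded graphs is perfectly approximated by an iso-injective encoding composed with a single-hidden-layer ReLU neural network. -/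
/-!
There are only finitely many graphs of size at most `b`, so `Alg` takes finitely many values on
them, and by iso-injectivity and invariance `f` factors through `Alg` there. A generic direction
`v` separates these finitely many points (a real vector space is not a finite union of the
hyperplanes `w^⊥`), which reduces the problem to interpolation on a finite subset of `ℝ`. There,
adding the points in increasing order, the neuron `t ↦ max 0 (t - θ)` with `θ` between the
previous points and the new one vanishes on the former and corrects the value at the latter.
-/

open scoped RealInnerProductSpace

/-- A finite vertex-labeled multigraph: a number of vertices `n`, a multiset of
unordered pairs of vertices as edges, and a vertex labeling into `ℕ+`. -/
def MGraph : Type := Σ n : ℕ, Multiset (Sym2 (Fin n)) × (Fin n → ℕ+)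

/-- Isomorphism of labeled multigraphs: a vertex bijection preserving the edge
multiset and the labels. -/
def MGraph.Iso (G H : MGraph) : Prop :=
  ∃ φ : Fin G.1 ≃ Fin H.1,
    Multiset.map (Sym2.map φ) G.2.1 = H.2.1 ∧ (H.2.2 ∘ φ = G.2.2)

/-- The size of a multigraph: number of vertices plus number of edges plus the
maximum label value (0 if there are no vertices). -/
def MGraph.size (G : MGraph) : ℕ :=
  G.1 + Multiset.card G.2.1 + Finset.univ.sup (fun i => (G.2.2 i : ℕ))

theorem Multiset.finite_card_le (α : Type*) [Finite α] (b : ℕ) :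
    {m : Multiset α | card m ≤ b}.Finite :=
  ((List.finite_length_le α b).image (↑)).subset fun m hm => ⟨m.toList, by simpa using hm, by simp⟩

theorem finite_setOf_forall_pnat_coe_le (ι : Type*) [Fintype ι] [DecidableEq ι] (b : ℕ) :
    {l : ι → ℕ+ | ∀ i, (l i : ℕ) ≤ b}.Finite :=
  (Set.finite_Iic fun _ => b.succPNat).subset fun l hl i => by
    simpa [← PNat.coe_le_coe] using (hl i).trans b.le_succ

namespace MGraph

theorem finite_size_le (b : ℕ) : {G : MGraph | G.size ≤ b}.Finite := by
  refine ((Set.finite_Iic b).biUnion fun n _ =>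
    ((Multiset.finite_card_le (Sym2 (Fin n)) b).prod
      (finite_setOf_forall_pnat_coe_le (Fin n) b)).image (Sigma.mk n)).subset fun G hG => ?_
  have hsize : G.1 + Multiset.card G.2.1 + Finset.univ.sup (fun i => (G.2.2 i : ℕ)) ≤ b := hG
  have hlabel (i : Fin G.1) : (G.2.2 i : ℕ) ≤ Finset.univ.sup (fun i => (G.2.2 i : ℕ)) :=
    Finset.le_sup (f := fun i => (G.2.2 i : ℕ)) (Finset.mem_univ i)
  simp only [Set.mem_iUnion]
  exact ⟨G.1, Set.mem_Iic.mpr (by omega), G.2,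
    ⟨show Multiset.card G.2.1 ≤ b by omega, fun i => by have := hlabel i; omega⟩, rfl⟩

end MGraph

section ReluNet

variable {E : Type*} [NormedAddCommGroup E] [InnerProductSpace ℝ E]

def reluNet {n : ℕ} (a : Fin n → E) (b c : Fin n → ℝ) (d₀ : ℝ) (x : E) : ℝ :=
  d₀ + ∑ i, c i * max 0 (⟪a i, x⟫ + b i)

theorem reluNet_cons {n : ℕ} (a₀ : E) (a : Fin n → E) (b₀ c₀ : ℝ) (b c : Fin n → ℝ) (d₀ : ℝ)
    (x : E) :
    reluNet (Fin.cons a₀ a) (Fin.cons b₀ b) (Fin.cons c₀ c) d₀ x =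
      c₀ * max 0 (⟪a₀, x⟫ + b₀) + reluNet a b c d₀ x := by
  simp only [reluNet, Fin.sum_univ_succ, Fin.cons_zero, Fin.cons_succ]
  ring

theorem reluNet_smul_comp_inner {n : ℕ} (α b c : Fin n → ℝ) (d₀ : ℝ) (v x : E) :
    reluNet (fun i => α i • v) b c d₀ x = reluNet α b c d₀ ⟪v, x⟫ := by
  simp only [reluNet, real_inner_smul_left, Real.inner_apply]

theorem exists_reluNet_eqOn_finset_real (S : Finset ℝ) (y : ℝ → ℝ) :
    ∃ (n : ℕ) (α b c : Fin n → ℝ) (d₀ : ℝ), ∀ t ∈ S, y t = reluNet α b c d₀ t := by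
  classical
  induction S using Finset.induction_on_max with
  | empty => exact ⟨0, Fin.elim0, Fin.elim0, Fin.elim0, 0, by simp⟩
  | insert m S hlt ih =>
    obtain ⟨n, α, b, c, d₀, hS⟩ := ih
    obtain ⟨θ, hθm, hSθ⟩ : ∃ θ < m, ∀ t ∈ S, t ≤ θ := by
      rcases S.eq_empty_or_nonempty with rfl | hne
      · exact ⟨m - 1, by linarith, by simp⟩
      · exact ⟨S.max' hne, hlt _ (S.max'_mem hne), S.le_max'⟩
    refine ⟨n + 1, Fin.cons 1 α, Fin.cons (-θ) b,
      Fin.cons ((y m - reluNet α b c d₀ m) / (m - θ)) c, d₀, ?_⟩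
    intro t ht
    rw [reluNet_cons, Real.inner_apply, one_mul]
    rcases Finset.mem_insert.mp ht with rfl | htS
    · rw [max_eq_right (by linarith), ← sub_eq_add_neg,
        div_mul_cancel₀ _ (sub_ne_zero.mpr hθm.ne'), sub_add_cancel]
    · rw [max_eq_left (by linarith [hSθ t htS]), mul_zero, zero_add, hS t htS]

theorem exists_forall_inner_ne_zero {T : Set E} (hT : T.Finite) (h0 : (0 : E) ∉ T) :
    ∃ v : E, ∀ w ∈ T, ⟪v, w⟫ ≠ 0 := by
  by_contra! hcover
  have : Finite T := hT.to_subtype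
  have hunion : ⋃ w : T, (LinearMap.ker (innerₛₗ ℝ (w : E)) : Set E) = Set.univ := by
    refine Set.eq_univ_of_forall fun v => ?_
    obtain ⟨w, hw, hvw⟩ := hcover v
    exact Set.mem_iUnion.mpr ⟨⟨w, hw⟩, by simpa [real_inner_comm] using hvw⟩
  obtain ⟨⟨w, hw⟩, hker⟩ := Subspace.exists_eq_top_of_iUnion_eq_univ hunion
  have hww : w ∈ LinearMap.ker (innerₛₗ ℝ w) := hker ▸ Submodule.mem_top
  exact h0 (inner_self_eq_zero.mp hww ▸ hw)

theorem exists_injOn_inner {S : Set E} (hS : S.Finite) : ∃ v : E, S.InjOn (⟪v, ·⟫) := by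
  obtain ⟨v, hv⟩ := exists_forall_inner_ne_zero
    (((hS.prod hS).image fun p => p.1 - p.2).sdiff (t := {0})) (by simp)
  refine ⟨v, fun x hx y hy hxy => by_contra fun hne => hv (x - y) ?_ ?_⟩
  · exact ⟨⟨(x, y), ⟨hx, hy⟩, rfl⟩, sub_ne_zero.mpr hne⟩
  · rw [inner_sub_right, sub_eq_zero]
    exact hxy

theorem exists_reluNet_eqOn {S : Set E} (hS : S.Finite) (g : E → ℝ) :
    ∃ (n : ℕ) (a : Fin n → E) (b c : Fin n → ℝ) (d₀ : ℝ), ∀ x ∈ S, g x = reluNet a b c d₀ x := by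
  obtain ⟨v, hv⟩ := exists_injOn_inner hS
  obtain ⟨n, α, b, c, d₀, hnet⟩ := exists_reluNet_eqOn_finset_real
    (hS.image (⟪v, ·⟫)).toFinset (g ∘ Function.invFunOn (⟪v, ·⟫) S)
  refine ⟨n, fun i => α i • v, b, c, d₀, fun x hx => ?_⟩
  rw [reluNet_smul_comp_inner, ← hnet _ ((Set.Finite.mem_toFinset _).mpr ⟨x, hx, rfl⟩),
    Function.comp_apply, hv.leftInvOn_invFunOn hx]

end ReluNet

/-- Every isomorphism-invariant real-valued function on graphs of size at most `b`
is perfectly approximated by an encoding `Alg` that is iso-injective on graphs of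
size at most `b`, composed with a single-hidden-layer ReLU neural network. -/
theorem invariant_function_eq_nn_of_isoInjective (b d : ℕ)
    (Alg : MGraph → EuclideanSpace ℝ (Fin d)) (f : MGraph → ℝ)
    (hAlg : ∀ G H : MGraph, MGraph.size G ≤ b → MGraph.size H ≤ b →
      Alg G = Alg H → MGraph.Iso G H)
    (hf : ∀ G H : MGraph, MGraph.Iso G H → f G = f H) :
    ∃ (n : ℕ) (a : Fin n → EuclideanSpace ℝ (Fin d)) (b' c : Fin n → ℝ) (d₀ : ℝ),
      ∀ G : MGraph, MGraph.size G ≤ b →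
        f G = d₀ + ∑ i, c i * max 0 ((inner ℝ (a i) (Alg G) : ℝ) + b' i) := by
  let s := {G : MGraph | G.size ≤ b}
  have hfactor : Function.FactorsThrough (fun G : s => f G) (fun G : s => Alg G) :=
    fun G H hGH => hf G H (hAlg G H G.2 H.2 hGH)
  obtain ⟨n, a, b', c, d₀, hnet⟩ := exists_reluNet_eqOn ((MGraph.finite_size_le b).image Alg)
    (Function.extend (fun G : s => Alg G) (fun G => f G) 0)
  refine ⟨n, a, b', c, d₀, fun G hG => ?_⟩
  rw [← hfactor.extend_apply 0 ⟨G, hG⟩]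
  exact hnet _ ⟨G, hG, rfl⟩
end

section
/- Define on natural numbers the Cantor pairing τ(i, j) = (i + j)(i + j + 1)/2 + j, the iterated pairing τ⁴(y, h, m, n) = τ(τ(τ(y, h), m), n), and ρ(i, j) = (i + j, i·j). Define r(y₁, h₁, m₁, n₁, y₂, h₂, m₂, n₂, b) = τ(τ(u + v, u·v), b) where u = τ⁴(y₁, h₁, m₁, n₁) and v = τ⁴(y₂, h₂, m₂, n₂). Then r is injective up to swapping the two quadruples: for all natural numbers, if r(y₁, h₁, m₁, n₁, y₂, h₂, m₂, n₂, b) = r(y₁', h₁', m₁', n₁', y₂', h₂', m₂', n₂', b'), then b = b' and either ((y₁, h₁, m₁, n₁), (y₂, h₂, m₂, n₂)) = ((y₁', h₁', m₁', n₁'), (y₂', h₂', m₂', n₂')) or ((y₁, h₁, m₁, n₁), (y₂, h₂, m₂, n₂)) = ((y₂', h₂', m₂', n₂'), (y₁', h₁', m₁', n₁')). -/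
/-- The Cantor pairing function on naturals: `τ(i, j) = (i + j)(i + j + 1)/2 + j`. -/
def tauN (i j : ℕ) : ℕ := (i + j) * (i + j + 1) / 2 + j

/-- Iterated pairing `τ⁴(y, h, m, n) = τ(τ(τ(y, h), m), n)`. -/
def tau4 (y h m n : ℕ) : ℕ := tauN (tauN (tauN y h) m) n

/-- `r = τ(τ(ρ(τ⁴(quadruple 1), τ⁴(quadruple 2))), b)` where `ρ(u, v) = (u + v, u·v)`
and `τ` applied to the pair `ρ(u, v)` means `τ(u + v, u·v)`. -/
def rComb (y₁ h₁ m₁ n₁ y₂ h₂ m₂ n₂ b : ℕ) : ℕ :=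
  tauN (tauN (tau4 y₁ h₁ m₁ n₁ + tau4 y₂ h₂ m₂ n₂)
    (tau4 y₁ h₁ m₁ n₁ * tau4 y₂ h₂ m₂ n₂)) b

/-! The pairing `τ` is injective: `τ(i, j) = triangle s + j` with `s = i + j` and `j ≤ s`, and the
intervals `[triangle s, triangle s + s]` are disjoint for distinct `s`. Hence `r` determines `b` and
the sum and product of `u = τ⁴(quadruple 1)` and `v = τ⁴(quadruple 2)`; by Vieta these determine
`{u, v}`, and injectivity of `τ⁴` recovers the quadruples. -/

def triangle (s : ℕ) : ℕ := s * (s + 1) / 2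

lemma tauN_eq_triangle_add (i j : ℕ) : tauN i j = triangle (i + j) + j := rfl

lemma triangle_succ (s : ℕ) : triangle (s + 1) = triangle s + (s + 1) := by
  have h : (s + 1) * (s + 1 + 1) = s * (s + 1) + (s + 1) * 2 := by ring
  rw [triangle, triangle, h, Nat.add_mul_div_right _ _ two_pos]

lemma triangle_mono : Monotone triangle := fun _ _ h =>
  Nat.div_le_div_right (Nat.mul_le_mul h (Nat.add_le_add_right h 1))

lemma triangle_add_lt_of_lt {s t : ℕ} (h : s < t) : triangle s + s < triangle t :=
  calc triangle s + s < triangle (s + 1) := by rw [triangle_succ]; omega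
    _ ≤ triangle t := triangle_mono h

theorem tauN_injective2 : Function.Injective2 tauN := by
  intro i i' j j' h
  rw [tauN_eq_triangle_add, tauN_eq_triangle_add] at h
  have hsum : i + j = i' + j' := by
    rcases lt_trichotomy (i + j) (i' + j') with hlt | heq | hgt
    · have := triangle_add_lt_of_lt hlt; omega
    · exact heq
    · have := triangle_add_lt_of_lt hgt; omega
  rw [hsum] at h
  omega

lemma tau4_inj {y h m n y' h' m' n' : ℕ} (he : tau4 y h m n = tau4 y' h' m' n') :
    (y, h, m, n) = (y', h', m', n') := by
  obtain ⟨hym, rfl⟩ := tauN_injective2 he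
  obtain ⟨hy, rfl⟩ := tauN_injective2 hym
  obtain ⟨rfl, rfl⟩ := tauN_injective2 hy
  rfl

theorem eq_and_eq_or_eq_and_eq_of_add_eq_of_mul_eq {R : Type*} [CommRing R] [NoZeroDivisors R]
    {u v u' v' : R} (hs : u + v = u' + v') (hp : u * v = u' * v') :
    (u = u' ∧ v = v') ∨ (u = v' ∧ v = u') := by
  have hroot : (u - u') * (u - v') = 0 := by linear_combination u * hs - hp
  rcases mul_eq_zero.mp hroot with h | h
  · obtain rfl := sub_eq_zero.mp h
    exact .inl ⟨rfl, add_left_cancel hs⟩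
  · obtain rfl := sub_eq_zero.mp h
    exact .inr ⟨rfl, add_left_cancel (hs.trans (add_comm _ _))⟩

theorem Nat.eq_and_eq_or_eq_and_eq_of_add_eq_of_mul_eq {u v u' v' : ℕ}
    (hs : u + v = u' + v') (hp : u * v = u' * v') :
    (u = u' ∧ v = v') ∨ (u = v' ∧ v = u') := by
  exact_mod_cast _root_.eq_and_eq_or_eq_and_eq_of_add_eq_of_mul_eq
    (by exact_mod_cast hs : (u : ℤ) + v = u' + v') (by exact_mod_cast hp : (u : ℤ) * v = u' * v')

/-- `r` is injective up to swapping the two quadruples. -/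
theorem rComb_injective_up_to_swap
    (y₁ h₁ m₁ n₁ y₂ h₂ m₂ n₂ b y₁' h₁' m₁' n₁' y₂' h₂' m₂' n₂' b' : ℕ)
    (h : rComb y₁ h₁ m₁ n₁ y₂ h₂ m₂ n₂ b = rComb y₁' h₁' m₁' n₁' y₂' h₂' m₂' n₂' b') :
    b = b' ∧
      ((((y₁, h₁, m₁, n₁), (y₂, h₂, m₂, n₂)) =
          (((y₁', h₁', m₁', n₁'), (y₂', h₂', m₂', n₂')))) ∨
       (((y₁, h₁, m₁, n₁), (y₂, h₂, m₂, n₂)) =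
          (((y₂', h₂', m₂', n₂'), (y₁', h₁', m₁', n₁'))))) := by
  obtain ⟨hsp, hb⟩ := tauN_injective2 h
  obtain ⟨hs, hp⟩ := tauN_injective2 hsp
  refine ⟨hb, ?_⟩
  rcases Nat.eq_and_eq_or_eq_and_eq_of_add_eq_of_mul_eq hs hp with ⟨hu, hv⟩ | ⟨hu, hv⟩
  · exact .inl (Prod.ext (tau4_inj hu) (tau4_inj hv))
  · exact .inr (Prod.ext (tau4_inj hu) (tau4_inj hv))
end

section
/- Let 𝒳 be a countable type and N : ℕ. Then there exists a function f : 𝒳 → ℝ such that the summation map X ↦ ∑_{x ∈ X} f x is injective on multisets over 𝒳 of cardinality at most N: for all multisets X Y over 𝒳 with Multiset.card X ≤ N and Multiset.card Y ≤ N, if ∑_{x ∈ X} f x = ∑_{x ∈ Y} f x then X = Y. Moreover, for any function g from {multisets over 𝒳 of cardinality at most N} to ℝ, there exists φ : ℝ → ℝ such that g X = φ(∑_{x ∈ X} f x) for every such multiset X. -/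
/-!
Enumerate `𝒳` injectively by `e : 𝒳 → ℕ` and put `f x = b ^ e x` with `b = N + 2`. The sum of `f`
over `X` is then the base-`b` numeral whose digits are the multiplicities in `X`; these are at most
`N < b`, so the sum determines `X`. Any `g` factors through an injective map by extending it.
-/

open Multiset

theorem Nat.ofDigits_map_range (b M : ℕ) (c : ℕ → ℕ) :
    Nat.ofDigits b ((List.range M).map c) = ∑ i ∈ Finset.range M, c i * b ^ i := by
  induction M with
  | zero => simp
  | succ M ih =>
    rw [List.range_succ, List.map_append, Nat.ofDigits_append, ih, Finset.sum_range_succ]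
    simp [mul_comm]

theorem Multiset.sum_map_pow_eq_ofDigits_count (b : ℕ) {M : ℕ} {A : Multiset ℕ}
    (hA : ∀ a ∈ A, a < M) :
    (A.map (b ^ ·)).sum = Nat.ofDigits b ((List.range M).map (A.count ·)) := by
  rw [Nat.ofDigits_map_range, Finset.sum_multiset_map_count]
  simp_rw [smul_eq_mul]
  refine Finset.sum_subset (fun a ha => Finset.mem_range.2 (hA a (mem_toFinset.1 ha))) ?_
  intro a _ ha
  rw [count_eq_zero.2 (mt mem_toFinset.2 ha), zero_mul]

theorem Multiset.injOn_sum_map_pow {b : ℕ} (hb : 1 < b) :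
    Set.InjOn (fun A : Multiset ℕ => (A.map (b ^ ·)).sum) {A | card A < b} := by
  intro A hA B hB hAB
  set M := (A + B).sup + 1
  have hlt : ∀ a ∈ A + B, a < M := fun a ha => Nat.lt_succ_of_le (le_sup ha)
  have hltA : ∀ a ∈ A, a < M := fun a ha => hlt a (mem_add.2 (.inl ha))
  have hltB : ∀ a ∈ B, a < M := fun a ha => hlt a (mem_add.2 (.inr ha))
  have hdigits : (List.range M).map (A.count ·) = (List.range M).map (B.count ·) := by
    refine Nat.ofDigits_inj_of_len_eq hb (by simp) ?_ ?_ ?_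
    · simpa using fun k _ => (count_le_card k A).trans_lt hA
    · simpa using fun k _ => (count_le_card k B).trans_lt hB
    · rw [← sum_map_pow_eq_ofDigits_count b hltA, ← sum_map_pow_eq_ofDigits_count b hltB]
      exact hAB
  ext k
  by_cases hk : k < M
  · exact List.map_inj_left.1 hdigits k (List.mem_range.2 hk)
  · rw [count_eq_zero.2 (fun h => hk (hltA k h)), count_eq_zero.2 (fun h => hk (hltB k h))]

/-- For a countable type `𝒳` and bound `N`, there is `f : 𝒳 → ℝ` so that summing
`f` over a multiset is injective on multisets of cardinality at most `N`; moreover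
every real-valued function `g` on such multisets decomposes as
`g X = φ (∑_{x ∈ X} f x)` for some `φ : ℝ → ℝ`. -/
theorem exists_injective_multiset_sum (𝒳 : Type*) [Countable 𝒳] (N : ℕ) :
    ∃ f : 𝒳 → ℝ,
      (∀ X Y : Multiset 𝒳, Multiset.card X ≤ N → Multiset.card Y ≤ N →
        (X.map f).sum = (Y.map f).sum → X = Y) ∧
      (∀ g : {X : Multiset 𝒳 // Multiset.card X ≤ N} → ℝ,
        ∃ φ : ℝ → ℝ, ∀ X : {X : Multiset 𝒳 // Multiset.card X ≤ N},
          g X = φ ((X.1.map f).sum)) := by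
  obtain ⟨e, he⟩ := Countable.exists_injective_nat 𝒳
  let f : 𝒳 → ℝ := fun x => ((N + 2) ^ e x : ℕ)
  have hsum : ∀ X : Multiset 𝒳, (X.map f).sum = (((X.map e).map ((N + 2) ^ ·)).sum : ℕ) := by
    intro X
    simp [f, Multiset.map_map]
  have hinj : ∀ X Y : Multiset 𝒳, card X ≤ N → card Y ≤ N →
      (X.map f).sum = (Y.map f).sum → X = Y := by
    intro X Y hX hY h
    rw [hsum, hsum, Nat.cast_inj] at h
    exact map_injective he <|
      injOn_sum_map_pow (by omega) (show card (X.map e) < N + 2 by rw [card_map]; omega)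
        (show card (Y.map e) < N + 2 by rw [card_map]; omega) h
  refine ⟨f, hinj, fun g => ⟨Function.extend (fun X => (X.1.map f).sum) g 0, fun X => ?_⟩⟩
  have hinj' : Function.Injective fun X : {X : Multiset 𝒳 // card X ≤ N} => (X.1.map f).sum :=
    fun X Y h => Subtype.ext (hinj X.1 Y.1 X.2 Y.2 h)
  exact (hinj'.extend_apply g 0 X).symm
end

section
/- Let 𝒳 be a type, Z : 𝒳 → ℕ an injective function, and N : ℕ. Define f : 𝒳 → ℝ by f x = (N : ℝ)^{-Z x} (i.e., N to the power minus Z x). Then for all multisets X Y over 𝒳 with Multiset.card X < N and Multiset.card Y < N, if ∑_{x ∈ X} f x = ∑_{x ∈ Y} f x then X = Y. -/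
/-!
Read `∑_{n ∈ s} N ^ (-n)` as an `N`-adic expansion whose digits are multiplicities `< N`.
If the smallest exponent `m` occurring in `s + t` occurred in only one of `s`, `t`, the other sum
would be a sum of fewer than `N` powers `N ^ (-n)` with `n > m`, hence `< N ^ (-m)`, while the
first is `≥ N ^ (-m)`. So `m` occurs in both, cancels, and induction finishes.
-/

namespace Multiset

variable {K : Type*} [Field K] [LinearOrder K] [IsStrictOrderedRing K] {N : ℕ}

theorem sum_map_zpow_neg_lt {s : Multiset ℤ} {k : ℤ} (hs : card s < N)
    (hk : ∀ n ∈ s, k < n) : (s.map fun n => (N : K) ^ (-n)).sum < (N : K) ^ (-k) := by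
  have hN : (0 : K) < N := by exact_mod_cast Nat.zero_lt_of_lt hs
  have hN₁ : (1 : K) ≤ N := by exact_mod_cast Nat.zero_lt_of_lt hs
  have hterm : ∀ x ∈ s.map fun n => (N : K) ^ (-n), x ≤ (N : K) ^ (-(k + 1)) := by
    simp only [mem_map, forall_exists_index, and_imp, forall_apply_eq_imp_iff₂]
    exact fun n hn => zpow_le_zpow_right₀ hN₁ (by linarith [hk n hn])
  calc (s.map fun n => (N : K) ^ (-n)).sum
      ≤ card s * (N : K) ^ (-(k + 1)) := by
        simpa only [card_map, nsmul_eq_mul] using sum_le_card_nsmul _ _ hterm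
    _ < N * (N : K) ^ (-(k + 1)) := by gcongr
    _ = (N : K) ^ (-k) := by rw [← zpow_one_add₀ hN.ne']; ring_nf

theorem mem_of_sum_map_zpow_neg_eq {s t : Multiset ℤ} {m : ℤ} (hm : m ∈ s)
    (hmin : ∀ n ∈ t, m ≤ n) (ht : card t < N)
    (h : (s.map fun n => (N : K) ^ (-n)).sum = (t.map fun n => (N : K) ^ (-n)).sum) : m ∈ t := by
  by_contra hmt
  have hlt : ∀ n ∈ t, m < n := fun n hn => (hmin n hn).lt_of_ne fun hnm => hmt (hnm ▸ hn)
  have hle : (N : K) ^ (-m) ≤ (s.map fun n => (N : K) ^ (-n)).sum :=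
    single_le_sum (by simp [zpow_nonneg]) _ (mem_map_of_mem _ hm)
  exact (h ▸ hle).not_gt (sum_map_zpow_neg_lt ht hlt)

theorem eq_of_sum_map_zpow_neg_eq {s t : Multiset ℤ} (hs : card s < N) (ht : card t < N)
    (h : (s.map fun n => (N : K) ^ (-n)).sum = (t.map fun n => (N : K) ^ (-n)).sum) : s = t := by
  induction s using strongInductionOn generalizing t with
  | ih s ih =>
    rcases eq_or_ne (s + t) 0 with hst | hst
    · obtain ⟨rfl, rfl⟩ := add_eq_zero.mp hst
      rfl
    obtain ⟨m, hm, hmin⟩ := exists_min_image id hst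
    have hmst : m ∈ s ∧ m ∈ t := by
      rcases mem_add.mp hm with hms | hmt
      · exact ⟨hms, mem_of_sum_map_zpow_neg_eq hms
          (fun n hn => hmin n (mem_add.mpr (.inr hn))) ht h⟩
      · exact ⟨mem_of_sum_map_zpow_neg_eq hmt
          (fun n hn => hmin n (mem_add.mpr (.inl hn))) hs h.symm, hmt⟩
    rw [← cons_erase hmst.1, ← cons_erase hmst.2, map_cons, map_cons, sum_cons, sum_cons,
      add_right_inj] at h
    rw [← cons_erase hmst.1, ← cons_erase hmst.2,
      ih _ (erase_lt.mpr hmst.1) ((card_le_card (erase_le m s)).trans_lt hs)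
        ((card_le_card (erase_le m t)).trans_lt ht) h]

end Multiset

/-- Let `Z : 𝒳 → ℕ` be injective and `f x = (N : ℝ) ^ (-(Z x))`. Then summing `f`
over a multiset determines the multiset, among multisets of cardinality
less than `N`. -/
theorem multiset_sum_injective_of_pow (𝒳 : Type*) (Z : 𝒳 → ℕ)
    (hZ : Function.Injective Z) (N : ℕ) :
    ∀ X Y : Multiset 𝒳, Multiset.card X < N → Multiset.card Y < N →
      (X.map fun x => (N : ℝ) ^ (-(Z x : ℤ))).sum =
        (Y.map fun x => (N : ℝ) ^ (-(Z x : ℤ))).sum →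
      X = Y := by
  intro X Y hX hY h
  refine Multiset.map_injective (f := fun x => (Z x : ℤ)) (Nat.cast_injective.comp hZ) ?_
  exact Multiset.eq_of_sum_map_zpow_neg_eq (K := ℝ) (N := N)
    (by simpa using hX) (by simpa using hY)
    (by simpa only [Multiset.map_map, Function.comp_def] using h)
end

section
/- Let G : SimpleGraph V and G* : SimpleGraph W be simple graphs with vertex labelings l : V → ℕ+ and l* : W → ℕ+. Let S₁, S₂ be subgraphs of G and S₁*, S₂* be subgraphs of G*, and suppose there are label-preserving graph isomorphisms φ₁ : S₁.coe ≃g S₁*.coe and φ₂ : S₂.coe ≃g S₂*.coe (label-preserving meaning l*(φᵢ v) = l v for every vertex v of Sᵢ). Assume furthermore that l is injective on S₁.verts ∪ S₂.verts, that l* is injective on S₁*.verts ∪ S₂*.verts, and that the set of labels {l v | v ∈ S₁.verts ∩ S₂.verts} equals the set of labels {l* w | w ∈ S₁*.verts ∩ S₂*.verts}. Then there exists a label-preserving graph isomorphism (S₁ ⊔ S₂).coe ≃g (S₁* ⊔ S₂*).coe. -/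
/-!
Label uniqueness forces `φ₁` and `φ₂` to agree on `S₁ ∩ S₂` (two vertices of `T₁ ∪ T₂` with
the same label coincide), and likewise forces `φ₁⁻¹` and `φ₂⁻¹` to agree on `T₁ ∩ T₂`. Two graph
isomorphisms of subgraphs that are compatible in this sense glue to an isomorphism of the unions,
whose inverse is the gluing of the inverses.
-/

open SimpleGraph

namespace SimpleGraph.Subgraph

variable {V W : Type*} {G : SimpleGraph V} {G' : SimpleGraph W}
  {S₁ S₂ : G.Subgraph} {T₁ T₂ : G'.Subgraph}

def AgreeOnInter (φ₁ : S₁.coe ≃g T₁.coe) (φ₂ : S₂.coe ≃g T₂.coe) : Prop :=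
  ∀ v (h₁ : v ∈ S₁.verts) (h₂ : v ∈ S₂.verts), (φ₁ ⟨v, h₁⟩ : W) = φ₂ ⟨v, h₂⟩

open scoped Classical in
noncomputable def glueMap (φ₁ : S₁.coe ≃g T₁.coe) (φ₂ : S₂.coe ≃g T₂.coe) :
    (S₁ ⊔ S₂).verts → (T₁ ⊔ T₂).verts := fun v =>
  if h : (v : V) ∈ S₁.verts then ⟨φ₁ ⟨v, h⟩, Or.inl (φ₁ ⟨v, h⟩).2⟩
  else ⟨φ₂ ⟨v, v.2.resolve_left h⟩, Or.inr (φ₂ _).2⟩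

variable {φ₁ : S₁.coe ≃g T₁.coe} {φ₂ : S₂.coe ≃g T₂.coe}

theorem coe_glueMap_of_mem_left (v : (S₁ ⊔ S₂).verts) (h : (v : V) ∈ S₁.verts) :
    (glueMap φ₁ φ₂ v : W) = φ₁ ⟨v, h⟩ := by
  simp only [glueMap, dif_pos h]

theorem coe_glueMap_of_mem_right (hφ : AgreeOnInter φ₁ φ₂) (v : (S₁ ⊔ S₂).verts)
    (h : (v : V) ∈ S₂.verts) : (glueMap φ₁ φ₂ v : W) = φ₂ ⟨v, h⟩ := by
  by_cases h₁ : (v : V) ∈ S₁.verts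
  · rw [coe_glueMap_of_mem_left v h₁, hφ v h₁ h]
  · simp only [glueMap, dif_neg h₁]

theorem glueMap_adj (hφ : AgreeOnInter φ₁ φ₂) {a b : (S₁ ⊔ S₂).verts}
    (hab : (S₁ ⊔ S₂).coe.Adj a b) : (T₁ ⊔ T₂).coe.Adj (glueMap φ₁ φ₂ a) (glueMap φ₁ φ₂ b) := by
  rcases hab with hab | hab
  · left
    have hT : T₁.coe.Adj (φ₁ ⟨a, hab.fst_mem⟩) (φ₁ ⟨b, hab.snd_mem⟩) := φ₁.map_rel_iff.mpr hab
    rwa [coe_glueMap_of_mem_left a hab.fst_mem, coe_glueMap_of_mem_left b hab.snd_mem]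
  · right
    have hT : T₂.coe.Adj (φ₂ ⟨a, hab.fst_mem⟩) (φ₂ ⟨b, hab.snd_mem⟩) := φ₂.map_rel_iff.mpr hab
    rwa [coe_glueMap_of_mem_right hφ a hab.fst_mem, coe_glueMap_of_mem_right hφ b hab.snd_mem]

theorem glueMap_symm_glueMap (hφ : AgreeOnInter φ₁ φ₂) (hψ : AgreeOnInter φ₁.symm φ₂.symm)
    (v : (S₁ ⊔ S₂).verts) : glueMap φ₁.symm φ₂.symm (glueMap φ₁ φ₂ v) = v := by
  apply Subtype.ext
  rcases v.2 with h | h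
  · have hT : (glueMap φ₁ φ₂ v : W) ∈ T₁.verts := by
      rw [coe_glueMap_of_mem_left v h]; exact (φ₁ _).2
    rw [coe_glueMap_of_mem_left _ hT]
    simp only [coe_glueMap_of_mem_left v h, Subtype.coe_eta, RelIso.symm_apply_apply]
  · have hT : (glueMap φ₁ φ₂ v : W) ∈ T₂.verts := by
      rw [coe_glueMap_of_mem_right hφ v h]; exact (φ₂ _).2
    rw [coe_glueMap_of_mem_right hψ _ hT]
    simp only [coe_glueMap_of_mem_right hφ v h, Subtype.coe_eta, RelIso.symm_apply_apply]

noncomputable def glueIso (hφ : AgreeOnInter φ₁ φ₂) (hψ : AgreeOnInter φ₁.symm φ₂.symm) :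
    (S₁ ⊔ S₂).coe ≃g (T₁ ⊔ T₂).coe where
  toFun := glueMap φ₁ φ₂
  invFun := glueMap φ₁.symm φ₂.symm
  left_inv := glueMap_symm_glueMap hφ hψ
  right_inv := glueMap_symm_glueMap (φ₁ := φ₁.symm) (φ₂ := φ₂.symm) hψ hφ
  map_rel_iff' {a b} := by
    refine ⟨fun hab => ?_, glueMap_adj hφ⟩
    simpa only [glueMap_symm_glueMap hφ hψ] using
      glueMap_adj hψ (a := glueMap φ₁ φ₂ a) (b := glueMap φ₁ φ₂ b) hab

section Labels

variable {α : Type*} {l : V → α} {l' : W → α}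

theorem label_symm_apply {S : G.Subgraph} {T : G'.Subgraph} {φ : S.coe ≃g T.coe}
    (hφ : ∀ v, l' (φ v) = l v) (w : T.verts) : l (φ.symm w) = l' w := by
  simpa only [RelIso.apply_symm_apply] using (hφ (φ.symm w)).symm

theorem agreeOnInter_of_injOn (hφ₁ : ∀ v, l' (φ₁ v) = l v) (hφ₂ : ∀ v, l' (φ₂ v) = l v)
    (hl' : Set.InjOn l' (T₁.verts ∪ T₂.verts)) : AgreeOnInter φ₁ φ₂ :=
  fun v h₁ h₂ =>
    hl' (Or.inl (φ₁ _).2) (Or.inr (φ₂ _).2) ((hφ₁ ⟨v, h₁⟩).trans (hφ₂ ⟨v, h₂⟩).symm)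

theorem label_glueMap (hφ₁ : ∀ v, l' (φ₁ v) = l v) (hφ₂ : ∀ v, l' (φ₂ v) = l v)
    (hφ : AgreeOnInter φ₁ φ₂) (v : (S₁ ⊔ S₂).verts) : l' (glueMap φ₁ φ₂ v) = l v := by
  rcases v.2 with h | h
  · rw [coe_glueMap_of_mem_left v h, hφ₁]
  · rw [coe_glueMap_of_mem_right hφ v h, hφ₂]

end Labels

end SimpleGraph.Subgraph

theorem glue_label_preserving_iso_general {V W : Type*}
    (G : SimpleGraph V) (G' : SimpleGraph W)
    (l : V → ℕ+) (l' : W → ℕ+)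
    (S₁ S₂ : G.Subgraph) (T₁ T₂ : G'.Subgraph)
    (φ₁ : S₁.coe ≃g T₁.coe) (φ₂ : S₂.coe ≃g T₂.coe)
    (hφ₁ : ∀ v : S₁.verts, l' (↑(φ₁ v)) = l (↑v))
    (hφ₂ : ∀ v : S₂.verts, l' (↑(φ₂ v)) = l (↑v))
    (hl : Set.InjOn l (S₁.verts ∪ S₂.verts))
    (hl' : Set.InjOn l' (T₁.verts ∪ T₂.verts)) :
    ∃ φ : (S₁ ⊔ S₂).coe ≃g (T₁ ⊔ T₂).coe,
      ∀ v : (S₁ ⊔ S₂).verts, l' (↑(φ v)) = l (↑v) := by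
  have hφ := Subgraph.agreeOnInter_of_injOn hφ₁ hφ₂ hl'
  have hψ := Subgraph.agreeOnInter_of_injOn
    (Subgraph.label_symm_apply hφ₁) (Subgraph.label_symm_apply hφ₂) hl
  exact ⟨Subgraph.glueIso hφ hψ, Subgraph.label_glueMap hφ₁ hφ₂ hφ⟩

/-- Gluing label-preserving isomorphisms: if `φ₁ : S₁ ≃g T₁` and `φ₂ : S₂ ≃g T₂`
are label-preserving isomorphisms of subgraphs, labels are unique within
`S₁.verts ∪ S₂.verts` and within `T₁.verts ∪ T₂.verts`, and the label sets of the
intersections agree, then there is a label-preserving isomorphism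
`(S₁ ⊔ S₂).coe ≃g (T₁ ⊔ T₂).coe`. -/
theorem glue_label_preserving_iso {V W : Type*}
    (G : SimpleGraph V) (G' : SimpleGraph W)
    (l : V → ℕ+) (l' : W → ℕ+)
    (S₁ S₂ : G.Subgraph) (T₁ T₂ : G'.Subgraph)
    (φ₁ : S₁.coe ≃g T₁.coe) (φ₂ : S₂.coe ≃g T₂.coe)
    (hφ₁ : ∀ v : S₁.verts, l' (↑(φ₁ v)) = l (↑v))
    (hφ₂ : ∀ v : S₂.verts, l' (↑(φ₂ v)) = l (↑v))
    (hl : Set.InjOn l (S₁.verts ∪ S₂.verts))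
    (hl' : Set.InjOn l' (T₁.verts ∪ T₂.verts))
    (hlabels : l '' (S₁.verts ∩ S₂.verts) = l' '' (T₁.verts ∩ T₂.verts)) :
    ∃ φ : (S₁ ⊔ S₂).coe ≃g (T₁ ⊔ T₂).coe,
      ∀ v : (S₁ ⊔ S₂).verts, l' (↑(φ v)) = l (↑v) :=
  glue_label_preserving_iso_general G G' l l' S₁ S₂ T₁ T₂ φ₁ φ₂ hφ₁ hφ₂ hl hl'
end
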